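/- Let β=(β_n)_{n∈ℕ} be a Cantor base with x_β<+∞. The sets Δ'_β and Σ'_β are both shift-invariant: σ(Δ'_β)⊆Δ'_β and σ(Σ'_β)⊆Σ'_β. -/

import Mathlib

open Filter Topology

/-- A Cantor real base: a sequence of reals `> 1` whose infinite product diverges to `+∞`. -/
structure IsCantorBase (β : ℕ → ℝ) : Prop where
  one_lt : ∀ n, 1 < β n
  prod_tendsto : Tendsto (fun N => ∏ i ∈ Finset.range N, β i) atTop atTop

/-- The product `β_0 ⋯ β_n`. -/
noncomputable def prodUpTo (β : ℕ → ℝ) (n : ℕ) : ℝ := ∏ i ∈ Finset.range (n + 1), β i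

/-- The shifted base `β^(n) = (β_n, β_{n+1}, …)`. -/
def shiftBase (β : ℕ → ℝ) (n : ℕ) : ℕ → ℝ := fun m => β (n + m)

/-- `x_β = Σ_{n} (⌈β_n⌉ - 1)/(β_0 ⋯ β_n)`. -/
noncomputable def xB (β : ℕ → ℝ) : ℝ := ∑' n, ((⌈β n⌉ : ℝ) - 1) / prodUpTo β n

/-- The condition `x_β < +∞`, i.e. the series defining `x_β` converges. -/
def XBSummable (β : ℕ → ℝ) : Prop :=
  Summable (fun n => ((⌈β n⌉ : ℝ) - 1) / prodUpTo β n)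

/-- `val_β(a) = Σ_n a_n/(β_0 ⋯ β_n)`. -/
noncomputable def valB (β : ℕ → ℝ) (a : ℕ → ℤ) : ℝ := ∑' n, (a n : ℝ) / prodUpTo β n

/-- The digit condition `a_n ∈ [[0, ⌈β_n⌉ - 1]]` for all `n`. -/
def validWord (β : ℕ → ℝ) (a : ℕ → ℤ) : Prop := ∀ n, 0 ≤ a n ∧ a n ≤ ⌈β n⌉ - 1

/-- The flip map `θ_β`. -/
noncomputable def theta (β : ℕ → ℝ) (a : ℕ → ℤ) : ℕ → ℤ := fun n => ⌈β n⌉ - 1 - a n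

/-- The greedy remainders `r_{β,n}(x)`. -/
noncomputable def greedyR (β : ℕ → ℝ) (x : ℝ) : ℕ → ℝ
  | 0 => β 0 * x - (⌊β 0 * x⌋ : ℝ)
  | n + 1 => β (n + 1) * greedyR β x n - (⌊β (n + 1) * greedyR β x n⌋ : ℝ)

/-- The greedy digits `ε_{β,n}(x)`; `greedyDigit β x` is the greedy β-expansion `d_β(x)`. -/
noncomputable def greedyDigit (β : ℕ → ℝ) (x : ℝ) : ℕ → ℤ
  | 0 => ⌊β 0 * x⌋
  | n + 1 => ⌊β (n + 1) * greedyR β x n⌋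

/-- The lazy remainders `s_{β,n}(x)`. -/
noncomputable def lazyS (β : ℕ → ℝ) (x : ℝ) : ℕ → ℝ
  | 0 => β 0 * x - (⌈β 0 * x - xB (shiftBase β 1)⌉ : ℝ)
  | n + 1 => β (n + 1) * lazyS β x n -
      (⌈β (n + 1) * lazyS β x n - xB (shiftBase β (n + 2))⌉ : ℝ)

/-- The lazy digits `ξ_{β,n}(x)`; `lazyDigit β x` is the lazy β-expansion `ℓ_β(x)`. -/
noncomputable def lazyDigit (β : ℕ → ℝ) (x : ℝ) : ℕ → ℤ
  | 0 => ⌈β 0 * x - xB (shiftBase β 1)⌉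
  | n + 1 => ⌈β (n + 1) * lazyS β x n - xB (shiftBase β (n + 2))⌉

/-- Strict lexicographic order on infinite words. -/
def lexLt (a b : ℕ → ℤ) : Prop := ∃ k, (∀ i < k, a i = b i) ∧ a k < b k

/-- Lexicographic order on infinite words. -/
def lexLe (a b : ℕ → ℤ) : Prop := lexLt a b ∨ a = b

/-- `D_β`, the set of greedy β-expansions of points of `[0,1)`. -/
def greedySet (β : ℕ → ℝ) : Set (ℕ → ℤ) :=
  {a | ∃ x ∈ Set.Ico (0 : ℝ) 1, a = greedyDigit β x}

/-- `D'_β`, the set of lazy β-expansions of points of `(x_β - 1, x_β]`. -/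
def lazySet (β : ℕ → ℝ) : Set (ℕ → ℤ) :=
  {a | ∃ x ∈ Set.Ioc (xB β - 1) (xB β), a = lazyDigit β x}

/-- `Δ'_β = ⋃_n D'_{β^(n)}`. -/
def deltaSet (β : ℕ → ℝ) : Set (ℕ → ℤ) := ⋃ n, lazySet (shiftBase β n)

/-! The lazy algorithm restarted after its first step is the lazy algorithm of the shifted
base: `σ(ℓ_β(x)) = ℓ_{β^(1)}(s_{β,0}(x))`, and `s_{β,0}(x) ∈ (x_{β^(1)} - 1, x_{β^(1)}]`
because `ξ_{β,0}(x)` is a ceiling. Hence `σ(D'_{β^(n)}) ⊆ D'_{β^(n+1)}`, and the statement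
for `Σ'_β` follows since `σ` is continuous for the product topology, which is that of the
prefix distance. -/

@[simp]
lemma shiftBase_shiftBase (β : ℕ → ℝ) (n k : ℕ) :
    shiftBase (shiftBase β n) k = shiftBase β (n + k) := by
  funext m; simp [shiftBase, add_assoc]

lemma shiftBase_one_apply (β : ℕ → ℝ) (n : ℕ) : shiftBase β 1 n = β (n + 1) := by
  rw [shiftBase, add_comm]

lemma lazyS_shiftBase_one (β : ℕ → ℝ) (x : ℝ) :
    ∀ n, lazyS (shiftBase β 1) (lazyS β x 0) n = lazyS β x (n + 1)
  | 0 => by simp [lazyS, shiftBase_one_apply]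
  | n + 1 => by
    rw [lazyS.eq_2, lazyS_shiftBase_one β x n, shiftBase_one_apply, shiftBase_shiftBase,
      Nat.add_comm 1]
    rfl

lemma lazyDigit_shiftBase_one (β : ℕ → ℝ) (x : ℝ) :
    ∀ n, lazyDigit (shiftBase β 1) (lazyS β x 0) n = lazyDigit β x (n + 1)
  | 0 => by simp [lazyDigit, lazyS, shiftBase_one_apply]
  | n + 1 => by
    rw [lazyDigit.eq_2, lazyS_shiftBase_one, shiftBase_one_apply, shiftBase_shiftBase,
      Nat.add_comm 1]
    rfl

lemma lazyS_zero_mem_Ioc (β : ℕ → ℝ) (x : ℝ) :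
    lazyS β x 0 ∈ Set.Ioc (xB (shiftBase β 1) - 1) (xB (shiftBase β 1)) := by
  have hceil := Int.ceil_lt_add_one (β 0 * x - xB (shiftBase β 1))
  have hle := Int.le_ceil (β 0 * x - xB (shiftBase β 1))
  constructor <;> simp only [lazyS] <;> linarith

lemma mapsTo_lazySet_shiftBase_one (β : ℕ → ℝ) :
    Set.MapsTo (fun a m => a (m + 1)) (lazySet β) (lazySet (shiftBase β 1)) := by
  rintro _ ⟨x, -, rfl⟩
  exact ⟨lazyS β x 0, lazyS_zero_mem_Ioc β x,
    funext fun n => (lazyDigit_shiftBase_one β x n).symm⟩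

lemma mapsTo_deltaSet (β : ℕ → ℝ) :
    Set.MapsTo (fun a m => a (m + 1)) (deltaSet β) (deltaSet β) := by
  intro a ha
  obtain ⟨n, ha⟩ := Set.mem_iUnion.1 ha
  have hshift := mapsTo_lazySet_shiftBase_one (shiftBase β n) ha
  rw [shiftBase_shiftBase] at hshift
  exact Set.mem_iUnion.2 ⟨n + 1, hshift⟩

theorem deltaSet_shift_invariant_general (β : ℕ → ℝ) :
    (∀ a ∈ deltaSet β, (fun m => a (m + 1)) ∈ deltaSet β) ∧
    (∀ a ∈ closure (deltaSet β), (fun m => a (m + 1)) ∈ closure (deltaSet β)) :=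
  ⟨mapsTo_deltaSet β,
    (mapsTo_deltaSet β).closure (continuous_pi fun m => continuous_apply (m + 1))⟩

/-- `Δ'_β` and `Σ'_β` are shift-invariant. -/
theorem deltaSet_shift_invariant (β : ℕ → ℝ) (hβ : IsCantorBase β) (hx : XBSummable β) :
    (∀ a ∈ deltaSet β, (fun m => a (m + 1)) ∈ deltaSet β) ∧
    (∀ a ∈ closure (deltaSet β), (fun m => a (m + 1)) ∈ closure (deltaSet β)) :=
  deltaSet_shift_invariant_general β
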